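/- arXiv:1506.00884 — 7 statements merged into one kernel-verified Lean document; each statement's English description precedes it below -/
import Mathlib

section
/- Let u, v, w be finite words over {0,1} with u and w nonempty, such that the infinite sequence u^ω equals v · w^ω. Then there exists a word x and natural numbers a, b such that u^m · v · w^n = v · x^(a·m + b·n) for all m, n ∈ ℕ. Moreover one may take a = |u|/d, b = |w|/d where d = gcd(|u|,|w|), and x the suffix of w of length d. -/
/-- The infinite repetition of a finite word `u`, as a function `ℕ → Bool`. -/
def rep (u : List Bool) : ℕ → Bool := fun n => u.getD (n % u.length) false

/-- The infinite sequence obtained by prepending the finite word `v` to the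
infinite sequence `s`. -/
def prepend (v : List Bool) (s : ℕ → Bool) : ℕ → Bool :=
  fun n => if n < v.length then v.getD n false else s (n - v.length)

/-- `u^k` : the `k`-fold concatenation of the finite word `u`. -/
def pow (u : List Bool) (k : ℕ) : List Bool := (List.replicate k u).flatten

/-- `n` is a period of `t`. -/
def IsPer (t : ℕ → Bool) (n : ℕ) : Prop := ∀ k, t (k + n) = t k

lemma isPer_mul {t : ℕ → Bool} {n : ℕ} (h : IsPer t n) (m : ℕ) : IsPer t (m * n) := by
  induction m with
  | zero => intro k; simp
  | succ m ih => intro k; have := ih (k + n); rw [h k] at this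
                 rw [← this]; ring_nf

lemma isPer_sub {t : ℕ → Bool} {n m : ℕ} (h : IsPer t (n + m)) (hm : IsPer t m) :
    IsPer t n := by
  intro k
  have h1 := hm (k + n)
  have h2 := h k
  rw [← add_assoc] at h2
  rw [← h1, h2]

lemma isPer_gcd {t : ℕ → Bool} {p q : ℕ} (hp : IsPer t p) (hq : IsPer t q) :
    IsPer t (Nat.gcd p q) := by
  induction p, q using Nat.gcd.induction generalizing t with
  | H0 q => simpa using hq
  | H1 p q hp0 ih =>
    rw [Nat.gcd_rec]
    apply ih _ hp
    have hqmod : IsPer t (q % p) := by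
      apply isPer_sub (m := (q / p) * p)
      · have : q % p + q / p * p = q := Nat.mod_add_div' q p
        rw [this]; exact hq
      · exact isPer_mul hp _
    exact hqmod

lemma isPer_mod {t : ℕ → Bool} {n : ℕ} (h : IsPer t n) (k : ℕ) : t k = t (k % n) := by
  conv_lhs => rw [← Nat.mod_add_div k n]
  have := isPer_mul h (k / n) (k % n)
  rw [mul_comm] at this
  exact this

lemma rep_isPer (y : List Bool) : IsPer (rep y) y.length := by
  intro k; simp [rep, Nat.add_mod_right]

lemma powList_succ (y : List Bool) (k : ℕ) : pow y (k + 1) = y ++ pow y k := by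
  simp [pow, List.replicate_succ]

lemma pow_length (y : List Bool) (k : ℕ) : (pow y k).length = k * y.length := by
  induction k with
  | zero => simp [pow]
  | succ k ih =>
    rw [powList_succ, List.length_append, ih, Nat.succ_mul]; omega

lemma pow_getD (y : List Bool) (k i : ℕ) (hi : i < k * y.length) :
    (pow y k).getD i false = rep y i := by
  induction k generalizing i with
  | zero => omega
  | succ k ih =>
    rw [Nat.succ_mul] at hi
    rw [powList_succ]
    by_cases hiy : i < y.length
    · rw [List.getD_append _ _ _ _ hiy]
      simp only [rep, Nat.mod_eq_of_lt hiy]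
    · push_neg at hiy
      rw [List.getD_append_right _ _ _ _ hiy]
      rw [ih _ (by omega)]
      have := rep_isPer y (i - y.length)
      rw [← this]
      congr 1; omega

lemma list_eq_of_getD {A B : List Bool} (hlen : A.length = B.length)
    (h : ∀ i < A.length, A.getD i false = B.getD i false) : A = B := by
  apply List.ext_getElem hlen
  intro i h1 h2
  have := h i h1
  rwa [List.getD_eq_getElem _ _ h1, List.getD_eq_getElem _ _ h2] at this

/-- If `u^ω = v · w^ω` with `u, w` nonempty, then there are a word `x` and
naturals `a, b` with `u^m · v · w^n = v · x^(a·m + b·n)` for all `m, n`;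
moreover one may take `a = |u|/d`, `b = |w|/d` and `x` the suffix of `w` of
length `d`, where `d = gcd (|u|, |w|)`. -/
theorem merge_lemma (u v w : List Bool) (hu : u ≠ []) (hw : w ≠ [])
    (h : rep u = prepend v (rep w)) :
    ∃ (x : List Bool) (a b : ℕ),
      a = u.length / Nat.gcd u.length w.length ∧
      b = w.length / Nat.gcd u.length w.length ∧
      x = w.drop (w.length - Nat.gcd u.length w.length) ∧
      ∀ m n : ℕ, pow u m ++ v ++ pow w n = v ++ pow x (a * m + b * n) := by
  set d := Nat.gcd u.length w.length with hd
  have hp0 : 0 < u.length := List.length_pos_iff.mpr hu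
  have hq0 : 0 < w.length := List.length_pos_iff.mpr hw
  have hd0 : 0 < d := Nat.gcd_pos_of_pos_left _ hp0
  have hdp : d ∣ u.length := Nat.gcd_dvd_left u.length w.length
  have hdq : d ∣ w.length := Nat.gcd_dvd_right u.length w.length
  set a := u.length / d with ha
  set b := w.length / d with hb
  have had : a * d = u.length := Nat.div_mul_cancel hdp
  have hbd : b * d = w.length := Nat.div_mul_cancel hdq
  set x := w.drop (w.length - d) with hx
  have hdq' : d ≤ w.length := Nat.le_of_dvd hq0 hdq
  have hxlen : x.length = d := by rw [hx, List.length_drop]; omega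
  refine ⟨x, a, b, rfl, rfl, rfl, ?_⟩
  clear_value x a b d
  -- pointwise form of h
  have hs : ∀ n : ℕ, rep u n = if n < v.length then v.getD n false else rep w (n - v.length) := by
    intro n; rw [h]; rfl
  -- rep w has period u.length
  have htp : IsPer (rep w) u.length := by
    intro k
    have h1 := hs (v.length + k + u.length)
    have h2 := hs (v.length + k)
    have h3 := rep_isPer u (v.length + k)
    rw [if_neg (show ¬ (v.length + k + u.length < v.length) by omega)] at h1
    rw [if_neg (show ¬ (v.length + k < v.length) by omega)] at h2
    rw [h1, h2] at h3
    have e1 : v.length + k + u.length - v.length = k + u.length := by omega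
    have e2 : v.length + k - v.length = k := by omega
    rw [e1, e2] at h3
    exact h3
  have htq : IsPer (rep w) w.length := rep_isPer w
  have htd : IsPer (rep w) d := by rw [hd]; exact isPer_gcd htp htq
  -- key: rep w j = rep x j  for all j
  have hxw : ∀ j, rep x j = rep w j := by
    intro j
    have hjd : j % d < d := Nat.mod_lt _ hd0
    have e1 : rep x j = x.getD (j % d) false := by rw [rep, hxlen]
    have e2 : x.getD (j % d) false = w.getD (w.length - d + j % d) false := by
      rw [hx]
      rw [List.getD_eq_getElem _ _ (by rw [List.length_drop]; omega),
          List.getD_eq_getElem _ _ (by omega)]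
      rw [List.getElem_drop]
    have e3 : w.getD (w.length - d + j % d) false = rep w (w.length - d + j % d) := by
      rw [rep]; congr 1; exact (Nat.mod_eq_of_lt (by omega)).symm
    have e4 : rep w (w.length - d + j % d) = rep w (j % d) := by
      have hcd : (b - 1) * d = w.length - d := by
        have hbd' := hbd
        cases b with
        | zero => rw [Nat.zero_mul] at hbd'; omega
        | succ b' =>
          rw [Nat.succ_sub_one]
          rw [Nat.succ_mul] at hbd'
          omega
      have h5 := isPer_mul htd (b - 1)
      rw [hcd] at h5
      rw [add_comm]
      exact h5 (j % d)
    have e5 : rep w (j % d) = rep w j := (isPer_mod htd j).symm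
    rw [e1, e2, e3, e4, e5]
  intro m n
  set K := a * m + b * n with hK
  have hKd : K * d = m * u.length + n * w.length := by
    rw [hK]
    calc (a * m + b * n) * d = m * (a * d) + n * (b * d) := by ring
    _ = m * u.length + n * w.length := by rw [had, hbd]
  apply list_eq_of_getD
  · simp only [List.length_append, pow_length, hxlen]
    omega
  · intro i hi
    simp only [List.length_append, pow_length] at hi
    -- compute both sides as rep u i
    have hlhs : (pow u m ++ v ++ pow w n).getD i false = rep u i := by
      by_cases h1 : i < m * u.length
      · rw [List.getD_append _ _ _ _ (by simp only [List.length_append, pow_length]; omega)]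
        rw [List.getD_append _ _ _ _ (by simp only [pow_length]; omega)]
        exact pow_getD u m i (by omega)
      · push_neg at h1
        have hiper : rep u i = rep u (i - m * u.length) := by
          have := isPer_mul (rep_isPer u) m (i - m * u.length)
          rw [← this]; congr 1; omega
        by_cases h2 : i < m * u.length + v.length
        · rw [List.getD_append _ _ _ _ (by simp only [List.length_append, pow_length]; omega)]
          rw [List.getD_append_right _ _ _ _ (by simp only [pow_length]; omega)]
          rw [hiper, hs, pow_length, if_pos (show i - m * u.length < v.length by omega)]
        · push_neg at h2
          rw [List.getD_append_right _ _ _ _ (by simp only [List.length_append, pow_length]; omega)]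
          rw [hiper, hs, if_neg (show ¬ (i - m * u.length < v.length) by omega)]
          simp only [List.length_append, pow_length]
          rw [pow_getD w n _ (by omega)]
          congr 1; omega
    have hrhs : (v ++ pow x K).getD i false = rep u i := by
      by_cases h1 : i < v.length
      · rw [List.getD_append _ _ _ _ h1, hs, if_pos h1]
      · push_neg at h1
        rw [List.getD_append_right _ _ _ _ h1]
        rw [pow_getD x K _ (by rw [hxlen]; omega)]
        rw [hxw, hs, if_neg (show ¬ (i < v.length) by omega)]
    rw [hlhs, hrhs]
end

section
/- If u^ω = v · w^ω with u, w nonempty words, then the infinite sequence u^ω is periodic with period length gcd(|u|, |w|). -/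
private lemma per_mul {α} (f : ℕ → α) (a : ℕ) (ha : ∀ n, f (n + a) = f n) :
    ∀ k n, f (n + k * a) = f n := by
  intro k
  induction k with
  | zero => simp
  | succ k ih =>
    intro n
    have : n + (k + 1) * a = (n + a) + k * a := by ring
    rw [this, ih, ha]

private lemma per_gcd {α} (f : ℕ → α) :
    ∀ a b, (∀ n, f (n + a) = f n) → (∀ n, f (n + b) = f n) →
      ∀ n, f (n + Nat.gcd a b) = f n := by
  intro a
  induction a using Nat.strong_induction_on with
  | _ a ih =>
    intro b ha hb n
    rcases Nat.eq_zero_or_pos a with h0 | h0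
    · subst h0; simpa using hb n
    · rw [Nat.gcd_rec]
      have hmod : ∀ n, f (n + b % a) = f n := by
        intro n
        have : f (n + b % a + a * (b / a)) = f (n + b % a) := by
          have := per_mul f a ha (b / a) (n + b % a)
          rwa [Nat.mul_comm] at this
        rw [← this]
        have : n + b % a + a * (b / a) = n + b := by
          rw [Nat.add_assoc, Nat.add_comm (b % a), Nat.div_add_mod]
        rw [this, hb]
      exact ih (b % a) (Nat.mod_lt b h0) a hmod ha n

/-- If `u^ω = v · w^ω` with `u, w` nonempty, then `u^ω` is periodic with
period length `gcd (|u|, |w|)`. -/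
theorem rep_periodic_gcd (u v w : List Bool) (hu : u ≠ []) (hw : w ≠ [])
    (h : rep u = prepend v (rep w)) :
    ∀ n, rep u (n + Nat.gcd u.length w.length) = rep u n := by
  intro n
  set L := u.length with hL
  set W := w.length with hW
  have hL0 : 0 < L := List.length_pos_iff.mpr hu
  have hperL : ∀ m, rep u (m + L) = rep u m := by
    intro m; simp only [rep, hL, Nat.add_mod_right]
  have hperWrep : ∀ m, rep w (m + W) = rep w m := by
    intro m; simp only [rep, hW, Nat.add_mod_right]
  -- shifted sequence
  set s : ℕ → Bool := fun m => rep u (m + v.length) with hs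
  have hsw : ∀ m, s m = rep w m := by
    intro m
    simp only [hs, h, prepend]
    rw [if_neg (by omega)]
    congr 1; omega
  have hsL : ∀ m, s (m + L) = s m := by
    intro m; simp only [hs]
    have : m + L + v.length = (m + v.length) + L := by ring
    rw [this, hperL]
  have hsW : ∀ m, s (m + W) = s m := by
    intro m; rw [hsw, hsw, hperWrep]
  have hsg := per_gcd s L W hsL hsW
  -- push n past v.length using period L
  have key : ∀ m, rep u m = rep u (m + v.length * L) := by
    intro m; rw [per_mul (rep u) L hperL v.length m]
  have hvL : v.length ≤ v.length * L := Nat.le_mul_of_pos_right _ hL0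
  set m := n + v.length * L - v.length with hm
  have hm1 : n + v.length * L = m + v.length := by omega
  have hm2 : n + Nat.gcd L W + v.length * L = (m + Nat.gcd L W) + v.length := by omega
  rw [key n, key (n + Nat.gcd L W), hm1, hm2]
  show s (m + Nat.gcd L W) = s m
  exact hsg m
end

section
/- If f : ℕ → ℕ is ultimately periodic modulo every positive modulus, and g(n) = b + Σ_{j=0}^{k-1} a_j · f(k·n + j) defines a function ℕ → ℕ (where a_0,…,a_{k-1}, b are rationals with nonnegative a_j such that g(n) is a natural number for all n), then g is ultimately periodic modulo every positive modulus. -/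
/-- `g` is ultimately periodic modulo `m`. -/
def UltPeriodicMod (g : ℕ → ℕ) (m : ℕ) : Prop :=
  ∃ n₀ p : ℕ, 1 ≤ p ∧ ∀ n ≥ n₀, g (n + p) % m = g n % m

/-- If `f` is ultimately periodic modulo every positive modulus and
`g n = b + Σ_{j<k} a_j · f (k·n + j)` (with rational weights `a_j ≥ 0`)
takes natural number values, then `g` is ultimately periodic modulo every
positive modulus. -/
theorem weightedSum_ultPeriodicMod (k : ℕ) (hk : 0 < k)
    (a : Fin k → ℚ) (ha : ∀ j, 0 ≤ a j) (b : ℚ) (f g : ℕ → ℕ)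
    (hf : ∀ m : ℕ, 1 ≤ m → UltPeriodicMod f m)
    (hg : ∀ n : ℕ, (g n : ℚ) = b + ∑ j : Fin k, a j * (f (k * n + (j : ℕ)) : ℚ)) :
    ∀ m : ℕ, 1 ≤ m → UltPeriodicMod g m := by
  intro m hm
  set d : ℕ := ∏ j : Fin k, (a j).den with hd
  have hdpos : 0 < d := Finset.prod_pos fun j _ => (a j).pos
  have hA : ∀ j : Fin k, ∃ A : ℤ, (a j) * (d : ℚ) = (A : ℚ) := by
    intro j
    obtain ⟨e, he⟩ := Finset.dvd_prod_of_mem (fun j => (a j).den) (Finset.mem_univ j)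
    refine ⟨(a j).num * (e : ℤ), ?_⟩
    rw [hd, he]
    push_cast
    rw [← mul_assoc, Rat.mul_den_eq_num]
  choose A hAeq using hA
  have hM : 1 ≤ m * d := Nat.one_le_iff_ne_zero.mpr (by positivity)
  obtain ⟨n₀, p, hp, hper⟩ := hf (m * d) hM
  have hper' : ∀ t, ∀ x ≥ n₀, f (x + t * p) % (m * d) = f x % (m * d) := by
    intro t
    induction t with
    | zero => simp
    | succ t ih =>
      intro x hx
      have h1 : x + (t + 1) * p = (x + t * p) + p := by ring
      rw [h1, hper _ (le_trans hx (Nat.le_add_right _ _)), ih x hx]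
  refine ⟨n₀, p, hp, ?_⟩
  intro n hn
  have hdiff : ∀ j : Fin k, ∃ c : ℤ,
      ((f (k * n + (j : ℕ)) : ℤ) - (f (k * (n + p) + (j : ℕ)) : ℤ)) = ((m * d : ℕ) : ℤ) * c := by
    intro j
    have hx : n₀ ≤ k * n + (j : ℕ) :=
      le_trans hn (le_trans (Nat.le_mul_of_pos_left n hk) (Nat.le_add_right _ _))
    have heq : k * (n + p) + (j : ℕ) = (k * n + (j : ℕ)) + k * p := by ring
    have h2 := hper' k (k * n + (j : ℕ)) hx
    rw [← heq] at h2
    exact (Nat.modEq_iff_dvd).mp h2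
  choose c hc using hdiff
  have hQ : ((g n : ℚ) - g (n + p)) * d = ∑ j : Fin k, (A j : ℚ) * (((m * d : ℕ) : ℚ) * c j) := by
    have hterm : ∀ j : Fin k,
        (a j * (f (k * n + (j : ℕ)) : ℚ) - a j * (f (k * (n + p) + (j : ℕ)) : ℚ)) * d
          = (A j : ℚ) * (((m * d : ℕ) : ℚ) * c j) := by
      intro j
      have hcj : ((f (k * n + (j : ℕ)) : ℚ) - (f (k * (n + p) + (j : ℕ)) : ℚ))
          = ((m * d : ℕ) : ℚ) * c j := by exact_mod_cast hc j
      calc (a j * (f (k * n + (j : ℕ)) : ℚ) - a j * (f (k * (n + p) + (j : ℕ)) : ℚ)) * d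
          = (a j * d) * ((f (k * n + (j : ℕ)) : ℚ) - (f (k * (n + p) + (j : ℕ)) : ℚ)) := by ring
        _ = (A j : ℚ) * (((m * d : ℕ) : ℚ) * c j) := by rw [hAeq j, hcj]
    calc ((g n : ℚ) - g (n + p)) * d
        = (∑ j : Fin k, (a j * (f (k * n + (j : ℕ)) : ℚ)
            - a j * (f (k * (n + p) + (j : ℕ)) : ℚ))) * d := by
          rw [hg n, hg (n + p), Finset.sum_sub_distrib]; ring
      _ = ∑ j : Fin k, (a j * (f (k * n + (j : ℕ)) : ℚ)
            - a j * (f (k * (n + p) + (j : ℕ)) : ℚ)) * d := Finset.sum_mul _ _ _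
      _ = ∑ j : Fin k, (A j : ℚ) * (((m * d : ℕ) : ℚ) * c j) :=
          Finset.sum_congr rfl fun j _ => hterm j
  have hZ : ((g n : ℤ) - g (n + p)) * d = ∑ j : Fin k, A j * (((m * d : ℕ) : ℤ) * c j) := by
    exact_mod_cast hQ
  have hZ' : ((g n : ℤ) - g (n + p)) * d = ((m : ℤ) * ∑ j : Fin k, A j * c j) * d := by
    rw [hZ, Finset.mul_sum, Finset.sum_mul]
    refine Finset.sum_congr rfl fun j _ => ?_
    push_cast
    ring
  have hfin : (g n : ℤ) - g (n + p) = (m : ℤ) * ∑ j : Fin k, A j * c j :=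
    mul_right_cancel₀ (by exact_mod_cast hdpos.ne') hZ'
  exact (Nat.modEq_iff_dvd).mpr ⟨∑ j : Fin k, A j * c j, hfin⟩
end

section
/- If f : ℕ → ℕ is spiralling and g(n) = b + Σ_{j=0}^{k-1} a_j · f(k·n + j) is a function ℕ → ℕ where the rational weights a_j ≥ 0 are not all zero, then g is spiralling. -/
/-- A function `f : ℕ → ℕ` is spiralling if it tends to infinity and is
ultimately periodic modulo every `m ≥ 1`. -/
def Spiralling (f : ℕ → ℕ) : Prop :=
  Filter.Tendsto f Filter.atTop Filter.atTop ∧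
  ∀ m : ℕ, 1 ≤ m → ∃ n₀ p : ℕ, 1 ≤ p ∧ ∀ n ≥ n₀, f (n + p) % m = f n % m

/-- If a rational's denominator divides `d`, then `d * q` is an integer. -/
lemma exists_int_of_den_dvd (q : ℚ) (d : ℕ) (hd : q.den ∣ d) :
    ∃ z : ℤ, (z : ℚ) = (d : ℚ) * q := by
  obtain ⟨e, he⟩ := hd
  refine ⟨(e : ℤ) * q.num, ?_⟩
  have hden : ((q.den : ℚ)) * q = (q.num : ℚ) := by
    rw [mul_comm]; exact Rat.mul_den_eq_num q
  push_cast
  rw [he]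
  push_cast
  rw [mul_comm (q.den : ℚ) (e : ℚ), mul_assoc, hden]

/-- If `f` is spiralling and `g n = b + Σ_{j<k} a_j · f (k·n + j)` with
rational weights `a_j ≥ 0` not all zero, then `g` is spiralling. -/
theorem weightedSum_spiralling (k : ℕ) (hk : 0 < k)
    (a : Fin k → ℚ) (ha : ∀ j, 0 ≤ a j) (ha' : ∃ j, a j ≠ 0) (b : ℚ)
    (f g : ℕ → ℕ) (hf : Spiralling f)
    (hg : ∀ n : ℕ, (g n : ℚ) = b + ∑ j : Fin k, a j * (f (k * n + (j : ℕ)) : ℚ)) :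
    Spiralling g := by
  obtain ⟨j₀, hj₀⟩ := ha'
  have hj₀pos : 0 < a j₀ := lt_of_le_of_ne (ha j₀) (Ne.symm hj₀)
  constructor
  · -- tendsto atTop
    rw [Filter.tendsto_atTop]
    intro C
    set R : ℕ := ⌈((C : ℚ) - b) / a j₀⌉₊ with hR
    obtain ⟨N, hN⟩ := Filter.eventually_atTop.mp (Filter.tendsto_atTop.mp hf.1 R)
    filter_upwards [Filter.eventually_ge_atTop N] with n hn
    have hkn : N ≤ k * n + (j₀ : ℕ) := by
      have : n ≤ k * n := Nat.le_mul_of_pos_left n hk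
      omega
    have hfR : (R : ℚ) ≤ (f (k * n + (j₀ : ℕ)) : ℚ) := by
      exact_mod_cast hN _ hkn
    have h1 : (C : ℚ) - b ≤ a j₀ * (f (k * n + (j₀ : ℕ)) : ℚ) := by
      have h2 : ((C : ℚ) - b) / a j₀ ≤ (R : ℚ) := Nat.le_ceil _
      have := (div_le_iff₀ hj₀pos).mp h2
      calc (C : ℚ) - b ≤ (R : ℚ) * a j₀ := this
        _ ≤ (f (k * n + (j₀ : ℕ)) : ℚ) * a j₀ := by
            exact mul_le_mul_of_nonneg_right hfR (le_of_lt hj₀pos)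
        _ = a j₀ * (f (k * n + (j₀ : ℕ)) : ℚ) := mul_comm _ _
    have hsum : a j₀ * (f (k * n + (j₀ : ℕ)) : ℚ) ≤
        ∑ j : Fin k, a j * (f (k * n + (j : ℕ)) : ℚ) := by
      apply Finset.single_le_sum (f := fun j : Fin k => a j * (f (k * n + (j : ℕ)) : ℚ))
      · intro j _
        exact mul_nonneg (ha j) (by positivity)
      · exact Finset.mem_univ j₀
    have : (C : ℚ) ≤ (g n : ℚ) := by
      rw [hg n]; linarith
    exact_mod_cast this
  · -- ultimately periodic mod m
    intro m hm
    -- common denominator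
    set D : ℕ := b.den * ∏ j : Fin k, (a j).den with hD
    have hDpos : 0 < D := by
      apply Nat.mul_pos b.pos
      apply Finset.prod_pos
      intro j _
      exact (a j).pos
    obtain ⟨B, hB⟩ := exists_int_of_den_dvd b D (dvd_mul_right _ _)
    have hc : ∀ j : Fin k, ∃ z : ℤ, (z : ℚ) = (D : ℚ) * a j := by
      intro j
      apply exists_int_of_den_dvd
      exact Dvd.dvd.mul_left (Finset.dvd_prod_of_mem _ (Finset.mem_univ j)) _
    choose c hcc using hc
    -- key integer identity
    have key : ∀ n : ℕ, (D : ℤ) * (g n : ℤ) =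
        B + ∑ j : Fin k, c j * (f (k * n + (j : ℕ)) : ℤ) := by
      intro n
      have hq : ((D : ℤ) * (g n : ℤ) : ℚ) =
          ((B + ∑ j : Fin k, c j * (f (k * n + (j : ℕ)) : ℤ) : ℤ) : ℚ) := by
        push_cast
        rw [hg n, mul_add, Finset.mul_sum, hB]
        congr 1
        apply Finset.sum_congr rfl
        intro j _
        rw [← mul_assoc, ← hcc j]
      exact_mod_cast hq
    obtain ⟨n₀, p, hp, hper⟩ := hf.2 (D * m) (Nat.one_le_iff_ne_zero.mpr (by positivity))
    -- iterate periodicity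
    have iter : ∀ t : ℕ, ∀ n ≥ n₀, f (n + t * p) % (D * m) = f n % (D * m) := by
      intro t
      induction t with
      | zero => intro n _; simp
      | succ t ih =>
        intro n hn
        have h1 : n + (t + 1) * p = (n + t * p) + p := by ring
        rw [h1, hper _ (le_trans hn (Nat.le_add_right _ _)), ih n hn]
    refine ⟨n₀, p, hp, ?_⟩
    intro n hn
    -- each term modular equality
    have hterm : ∀ j : Fin k, ((D * m : ℕ) : ℤ) ∣
        ((f (k * (n + p) + (j : ℕ)) : ℤ) - (f (k * n + (j : ℕ)) : ℤ)) := by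
      intro j
      have harg : k * (n + p) + (j : ℕ) = (k * n + (j : ℕ)) + k * p := by ring
      have hbase : n₀ ≤ k * n + (j : ℕ) := by
        have : n ≤ k * n := Nat.le_mul_of_pos_left n hk
        omega
      have := iter k (k * n + (j : ℕ)) hbase
      rw [mul_comm k p] at harg
      rw [harg, mul_comm p k] at *
      have hmod : f ((k * n + (j : ℕ)) + k * p) % (D * m) = f (k * n + (j : ℕ)) % (D * m) :=
        this
      have : (f ((k * n + (j : ℕ)) + k * p) : ℤ) ≡ (f (k * n + (j : ℕ)) : ℤ) [ZMOD (D * m : ℕ)] :=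
        Int.natCast_modEq_iff.mpr hmod
      exact (Int.ModEq.dvd this.symm)
    have hdvd : ((D * m : ℕ) : ℤ) ∣ (D : ℤ) * ((g (n + p) : ℤ) - (g n : ℤ)) := by
      rw [mul_sub, key, key, add_sub_add_left_eq_sub, ← Finset.sum_sub_distrib]
      apply Finset.dvd_sum
      intro j _
      rw [← mul_sub]
      exact Dvd.dvd.mul_left (hterm j) _
    have hmdvd : (m : ℤ) ∣ ((g (n + p) : ℤ) - (g n : ℤ)) := by
      have hcast : ((D * m : ℕ) : ℤ) = (D : ℤ) * (m : ℤ) := by push_cast; ring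
      rw [hcast] at hdvd
      have hDne : (D : ℤ) ≠ 0 := by exact_mod_cast hDpos.ne'
      exact (mul_dvd_mul_iff_left hDne).mp hdvd
    exact Int.natCast_modEq_iff.mp ((Int.modEq_iff_dvd.mpr hmdvd).symm)
end

section
/- Pumping lemma for finite-state transducers: Let T = (Q, q₀, δ, λ) be a complete deterministic finite-state transducer over input alphabet {0,1}. Let Z(T) be the least common multiple of the lengths of all zero-loops of T. Then for every state q ∈ Q and every n ≥ |Q|, there exist finite words p, c over the output alphabet such that for all i ∈ ℕ: δ*(q, 1·0^(n + i·Z(T))) = δ*(q, 1·0^n) and λ*(q, 1·0^(n + i·Z(T))) = p · c^i. -/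
/-- Extension of the transition function to input words. -/
def dstar {Q : Type*} (δ : Q → Bool → Q) : Q → List Bool → Q
  | q, [] => q
  | q, a :: u => dstar δ (δ q a) u

/-- Extension of the output function to input words. -/
def lstar {Q : Type*} (δ : Q → Bool → Q) (lam : Q → Bool → List Bool) :
    Q → List Bool → List Bool
  | _, [] => []
  | q, a :: u => lam q a ++ lstar δ lam (δ q a) u

/-- `ℓ` is the length of a zero-loop of the transducer with transition
function `δ`: a cycle of length `ℓ ≥ 1` of pairwise distinct states under
reading `0` (= `false`), i.e. `ℓ` is the minimal return time of some state. -/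
def IsZeroLoopLen {Q : Type*} (δ : Q → Bool → Q) (ℓ : ℕ) : Prop :=
  1 ≤ ℓ ∧ ∃ q : Q, (fun s => δ s false)^[ℓ] q = q ∧
    ∀ j, 0 < j → j < ℓ → (fun s => δ s false)^[j] q ≠ q

/-- `Z(T)`: the least common multiple of the lengths of all zero-loops. -/
noncomputable def ZT {Q : Type*} [Fintype Q] (δ : Q → Bool → Q) : ℕ :=
  letI : DecidablePred (IsZeroLoopLen δ) := fun _ => Classical.dec _
  ((Finset.range (Fintype.card Q + 1)).filter (IsZeroLoopLen δ)).lcm id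

/-- Pumping lemma for finite-state transducers: for every state `q` and every
`n ≥ |Q|` there are words `p, c` such that for all `i`, reading `1·0^(n+i·Z(T))`
leads to the same state as reading `1·0^n`, and outputs `p · c^i`. -/
theorem fst_pumping {Q : Type*} [Fintype Q] (δ : Q → Bool → Q)
    (lam : Q → Bool → List Bool) (q : Q) (n : ℕ) (hn : Fintype.card Q ≤ n) :
    ∃ p c : List Bool, ∀ i : ℕ,
      dstar δ q (true :: List.replicate (n + i * ZT δ) false) =
        dstar δ q (true :: List.replicate n false) ∧
      lstar δ lam q (true :: List.replicate (n + i * ZT δ) false) =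
        p ++ (List.replicate i c).flatten := by
  classical
  set f : Q → Q := fun s => δ s false with hf
  -- basic lemmas
  have hd : ∀ (m : ℕ) (s : Q), dstar δ s (List.replicate m false) = f^[m] s := by
    intro m
    induction m with
    | zero => intro s; simp [dstar]
    | succ m ih =>
        intro s
        rw [List.replicate_succ]
        show dstar δ (δ s false) (List.replicate m false) = _
        rw [ih, Function.iterate_succ_apply]
  have hl : ∀ (m k : ℕ) (s : Q),
      lstar δ lam s (List.replicate (m + k) false) =
        lstar δ lam s (List.replicate m false) ++
          lstar δ lam (f^[m] s) (List.replicate k false) := by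
    intro m
    induction m with
    | zero => intro k s; simp [lstar]
    | succ m ih =>
        intro k s
        have : m + 1 + k = (m + k) + 1 := by omega
        rw [this, List.replicate_succ, List.replicate_succ]
        show lam s false ++ lstar δ lam (δ s false) (List.replicate (m + k) false) =
          (lam s false ++ lstar δ lam (δ s false) (List.replicate m false)) ++ _
        rw [ih k (δ s false), Function.iterate_succ_apply, List.append_assoc]
  -- the state after reading `true`
  set q₁ : Q := δ q true with hq₁
  -- pigeonhole: find a repetition in the orbit of q₁ under f
  obtain ⟨a, b, hab, heq⟩ :
      ∃ a b : Fin (Fintype.card Q + 1), a ≠ b ∧ f^[(a : ℕ)] q₁ = f^[(b : ℕ)] q₁ := by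
    have hcard : Fintype.card Q < Fintype.card (Fin (Fintype.card Q + 1)) := by simp
    obtain ⟨a, b, hab, h⟩ :=
      Fintype.exists_ne_map_eq_of_card_lt (fun m : Fin (Fintype.card Q + 1) => f^[(m : ℕ)] q₁)
        hcard
    exact ⟨a, b, hab, h⟩
  -- wlog a < b
  obtain ⟨a, b, hab, heq⟩ :
      ∃ a b : ℕ, a < b ∧ b ≤ Fintype.card Q ∧ f^[a] q₁ = f^[b] q₁ := by
    rcases lt_or_gt_of_ne hab with h | h
    · exact ⟨a, b, h, Nat.lt_succ_iff.mp b.isLt, heq⟩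
    · exact ⟨b, a, h, Nat.lt_succ_iff.mp a.isLt, heq.symm⟩
  obtain ⟨hb, heq⟩ := heq
  set x : Q := f^[a] q₁ with hx
  have hxfix : f^[b - a] x = x := by
    rw [hx, ← Function.iterate_add_apply, Nat.sub_add_cancel (le_of_lt hab), ← heq]
  have hPex : ∃ m, 0 < m ∧ f^[m] x = x := ⟨b - a, by omega, hxfix⟩
  set ℓ : ℕ := Nat.find hPex with hℓdef
  have hℓspec := Nat.find_spec hPex
  have hℓle : ℓ ≤ b - a := Nat.find_le ⟨by omega, hxfix⟩
  have hzl : IsZeroLoopLen δ ℓ :=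
    ⟨hℓspec.1, x, hℓspec.2, fun j hj hjℓ hfix => Nat.find_min hPex hjℓ ⟨hj, hfix⟩⟩
  have hdvd : ℓ ∣ ZT δ := by
    have hmem : ℓ ∈ (Finset.range (Fintype.card Q + 1)).filter (IsZeroLoopLen δ) := by
      refine Finset.mem_filter.mpr ⟨Finset.mem_range.mpr ?_, hzl⟩
      omega
    simpa [ZT] using Finset.dvd_lcm (f := (id : ℕ → ℕ)) hmem
  have hZx : f^[ZT δ] x = x := by
    obtain ⟨k, hk⟩ := hdvd
    rw [hk, Function.iterate_mul]
    exact Function.iterate_fixed hℓspec.2 k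
  set r : Q := f^[n] q₁ with hr
  have hrx : r = f^[n - a] x := by
    rw [hx, ← Function.iterate_add_apply, Nat.sub_add_cancel (by omega : a ≤ n)]
  have hZr : f^[ZT δ] r = r := by
    rw [hrx, ← Function.iterate_add_apply, Nat.add_comm, Function.iterate_add_apply, hZx]
  have hZir : ∀ i : ℕ, f^[i * ZT δ] r = r := by
    intro i
    rw [Nat.mul_comm, Function.iterate_mul]
    exact Function.iterate_fixed hZr i
  set c : List Bool := lstar δ lam r (List.replicate (ZT δ) false) with hc
  have hpump : ∀ i : ℕ,
      lstar δ lam r (List.replicate (i * ZT δ) false) = (List.replicate i c).flatten := by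
    intro i
    induction i with
    | zero => simp [lstar]
    | succ i ih =>
        have : (i + 1) * ZT δ = ZT δ + i * ZT δ := by ring
        rw [this, hl, hZr, ih, List.replicate_succ]; simp [List.flatten, hc]
  refine ⟨lam q true ++ lstar δ lam q₁ (List.replicate n false), c, fun i => ?_⟩
  constructor
  · show dstar δ q₁ (List.replicate (n + i * ZT δ) false) =
      dstar δ q₁ (List.replicate n false)
    rw [hd, hd, Nat.add_comm, Function.iterate_add_apply, ← hr, hZir]
  · show lam q true ++ lstar δ lam q₁ (List.replicate (n + i * ZT δ) false) =
      (lam q true ++ lstar δ lam q₁ (List.replicate n false)) ++ (List.replicate i c).flatten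
    rw [hl, ← hr, hpump, List.append_assoc]
end

section
/- For any f : ℕ → ℕ and constant a ≥ 1, the sequences ⟨f⟩ and ⟨a·f⟩ are transducer-equivalent, where ⟨g⟩ = 1 0^{g(0)} 1 0^{g(1)} 1 0^{g(2)} ⋯; i.e., there is an FST transducing ⟨a·f(n)⟩ to ⟨f(n)⟩ and an FST transducing ⟨f(n)⟩ to ⟨a·f(n)⟩. -/
/-- A complete deterministic finite-state transducer over alphabet `{0,1}`
(represented by `Bool`). -/
structure FST where
  Q : Type
  fin : Fintype Q
  q0 : Q
  step : Q → Bool → Q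
  out : Q → Bool → List Bool

/-- The state of `T` after reading the first `n` letters of `σ`. -/
def FST.stateAt (T : FST) (σ : ℕ → Bool) : ℕ → T.Q
  | 0 => T.q0
  | n + 1 => T.step (T.stateAt σ n) (σ n)

/-- The output produced by `T` after reading the first `n` letters of `σ`. -/
def FST.outPrefix (T : FST) (σ : ℕ → Bool) (n : ℕ) : List Bool :=
  ((List.range n).map fun i => T.out (T.stateAt σ i) (σ i)).flatten

/-- `T` transduces the infinite sequence `σ` to the infinite sequence `τ`:
the outputs grow unboundedly and each finite output is a prefix of `τ`. -/
def FST.Transduces (T : FST) (σ τ : ℕ → Bool) : Prop :=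
  Filter.Tendsto (fun n => (T.outPrefix σ n).length) Filter.atTop Filter.atTop ∧
  ∀ n j, j < (T.outPrefix σ n).length → (T.outPrefix σ n).getD j false = τ j

/-- `σ ≥ τ`: some FST transduces `σ` to `τ`. -/
def Ge (σ τ : ℕ → Bool) : Prop := ∃ T : FST, T.Transduces σ τ
/-- `⟨f⟩ = 1 0^(f 0) 1 0^(f 1) 1 0^(f 2) ⋯` as an infinite binary sequence:
position `n` holds `1` (= `true`) iff `n = k + f 0 + ⋯ + f (k-1)` for some `k`. -/
def seqOf (f : ℕ → ℕ) : ℕ → Bool :=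
  fun n => (List.range (n + 1)).any fun k =>
    decide (k + ∑ i ∈ Finset.range k, f i = n)

/-! ### Auxiliary machinery -/

/-- Position of the `k`-th `1` in `seqOf h`. -/
def Bpos (h : ℕ → ℕ) (k : ℕ) : ℕ := k + ∑ i ∈ Finset.range k, h i

lemma Bpos_zero (h : ℕ → ℕ) : Bpos h 0 = 0 := by simp [Bpos]

lemma Bpos_succ (h : ℕ → ℕ) (k : ℕ) : Bpos h (k + 1) = Bpos h k + 1 + h k := by
  simp [Bpos, Finset.sum_range_succ]; ring

lemma Bpos_strictMono (h : ℕ → ℕ) : StrictMono (Bpos h) :=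
  strictMono_nat_of_lt_succ fun k => by rw [Bpos_succ]; omega

lemma seqOf_true_iff (h : ℕ → ℕ) (n : ℕ) : seqOf h n = true ↔ ∃ k, Bpos h k = n := by
  simp only [seqOf, List.any_eq_true, List.mem_range, decide_eq_true_eq]
  constructor
  · rintro ⟨k, -, hk⟩; exact ⟨k, hk⟩
  · rintro ⟨k, hk⟩
    have hk' : k + ∑ i ∈ Finset.range k, h i = n := hk
    exact ⟨k, by omega, hk'⟩

lemma seqOf_Bpos (h : ℕ → ℕ) (k : ℕ) : seqOf h (Bpos h k) = true :=
  (seqOf_true_iff h _).mpr ⟨k, rfl⟩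

lemma seqOf_false (h : ℕ → ℕ) (k j : ℕ) (h1 : Bpos h k < j) (h2 : j < Bpos h (k + 1)) :
    seqOf h j = false := by
  by_contra hc
  have : seqOf h j = true := by
    cases hseq : seqOf h j with
    | false => exact absurd hseq hc
    | true => rfl
  obtain ⟨m, hm⟩ := (seqOf_true_iff h j).mp this
  rcases le_or_gt m k with hmk | hmk
  · have := (Bpos_strictMono h).monotone hmk
    omega
  · have := (Bpos_strictMono h).monotone (show k + 1 ≤ m from hmk)
    omega

lemma seqOf_false_in_block (h : ℕ → ℕ) (k r : ℕ) (h1 : 1 ≤ r) (h2 : r ≤ h k) :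
    seqOf h (Bpos h k + r) = false := by
  apply seqOf_false h k
  · omega
  · rw [Bpos_succ]; omega

lemma Bpos_decomp (h : ℕ → ℕ) (n : ℕ) : ∃ k r, r ≤ h k ∧ n = Bpos h k + r := by
  induction n with
  | zero => exact ⟨0, 0, Nat.zero_le _, by simp [Bpos_zero]⟩
  | succ n ih =>
    obtain ⟨k, r, hr, hn⟩ := ih
    rcases eq_or_lt_of_le hr with h1 | h1
    · exact ⟨k + 1, 0, Nat.zero_le _, by rw [Bpos_succ]; omega⟩
    · exact ⟨k, r + 1, h1, by omega⟩

lemma FST.outPrefix_succ (T : FST) (σ : ℕ → Bool) (n : ℕ) :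
    T.outPrefix σ (n + 1) = T.outPrefix σ n ++ T.out (T.stateAt σ n) (σ n) := by
  simp [FST.outPrefix, List.range_succ]

lemma FST.outPrefix_len_mono (T : FST) (σ : ℕ → Bool) :
    Monotone fun n => (T.outPrefix σ n).length :=
  monotone_nat_of_le_succ fun n => by rw [T.outPrefix_succ]; simp

lemma map_range_succ (τ : ℕ → Bool) (L : ℕ) :
    (List.range (L + 1)).map τ = (List.range L).map τ ++ [τ L] := by
  rw [List.range_succ, List.map_append]; rfl

lemma map_range_add_replicate (τ : ℕ → Bool) (L a : ℕ)
    (h : ∀ j, L ≤ j → j < L + a → τ j = false) :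
    (List.range (L + a)).map τ = (List.range L).map τ ++ List.replicate a false := by
  rw [List.range_add, List.map_append]
  congr 1
  rw [List.map_map, List.eq_replicate_iff]
  refine ⟨by simp, ?_⟩
  intro b hb
  simp only [List.mem_map, List.mem_range, Function.comp_apply] at hb
  obtain ⟨i, hi, rfl⟩ := hb
  exact h (L + i) (Nat.le_add_right _ _) (by omega)

lemma transduces_of (T : FST) (σ τ : ℕ → Bool)
    (hL : ∀ n, ∃ L, T.outPrefix σ n = (List.range L).map τ)
    (hU : ∀ b : ℕ, ∃ n, b ≤ (T.outPrefix σ n).length) :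
    T.Transduces σ τ := by
  constructor
  · rw [Filter.tendsto_atTop_atTop]
    intro b
    obtain ⟨n, hn⟩ := hU b
    exact ⟨n, fun m hm => le_trans hn (T.outPrefix_len_mono σ hm)⟩
  · intro n j hj
    obtain ⟨L, hLeq⟩ := hL n
    rw [hLeq] at hj ⊢
    have hjL : j < L := by simpa using hj
    rw [List.getD_eq_getElem _ _ (by simpa using hjL)]
    simp [hjL]

/-! ### Direction 2: `⟨f⟩ ≥ ⟨a·f⟩` (expand each 0 into a zeros) -/

def expandT (a : ℕ) : FST where
  Q := Unit
  fin := inferInstance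
  q0 := ()
  step _ _ := ()
  out _ b := if b then [true] else List.replicate a false

lemma expand_inv (f : ℕ → ℕ) (a : ℕ) (ha : 1 ≤ a) (k : ℕ)
    (hbase : (expandT a).outPrefix (seqOf f) (Bpos f k)
      = (List.range (Bpos (fun n => a * f n) k)).map (seqOf fun n => a * f n)) :
    ∀ r, r ≤ f k + 1 →
      (expandT a).outPrefix (seqOf f) (Bpos f k + r)
        = (List.range (Bpos (fun n => a * f n) k + min r 1 + a * (r - 1))).map
            (seqOf fun n => a * f n) := by
  set g := fun n => a * f n with hg
  intro r
  induction r with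
  | zero => intro _; simpa using hbase
  | succ s ih =>
    intro hs
    have ihs := ih (by omega)
    rw [show Bpos f k + (s + 1) = (Bpos f k + s) + 1 from rfl, FST.outPrefix_succ, ihs]
    rcases Nat.eq_zero_or_pos s with hs0 | hs0
    · subst hs0
      have hσ : seqOf f (Bpos f k + 0) = true := by simpa using seqOf_Bpos f k
      rw [hσ]
      have hτ : seqOf g (Bpos g k) = true := seqOf_Bpos g k
      simp only [expandT, if_pos rfl]
      rw [show Bpos g k + min 0 1 + a * (0 - 1) = Bpos g k by simp,
        show Bpos g k + min (0 + 1) 1 + a * (0 + 1 - 1) = Bpos g k + 1 by simp,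
        map_range_succ, hτ]
      simp
    · have hσ : seqOf f (Bpos f k + s) = false :=
        seqOf_false_in_block f k s hs0 (by omega)
      rw [hσ]
      simp only [expandT, Bool.false_eq_true, if_false]
      have hmin : min s 1 = 1 := by omega
      have hmin' : min (s + 1) 1 = 1 := by omega
      rw [hmin, hmin',
        show a * (s + 1 - 1) = a * (s - 1) + a by
          have h1 : s + 1 - 1 = (s - 1) + 1 := by omega
          rw [h1, Nat.mul_add, Nat.mul_one],
        show Bpos g k + 1 + (a * (s - 1) + a) = (Bpos g k + 1 + a * (s - 1)) + a by ring]
      refine (map_range_add_replicate _ _ _ ?_).symm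
      intro j hj1 hj2
      apply seqOf_false g k
      · omega
      · rw [Bpos_succ]
        have hsg : s ≤ f k := by omega
        have hle : a * (s - 1) + a ≤ a * f k := by
          have h2 : a * ((s - 1) + 1) ≤ a * f k := Nat.mul_le_mul_left a (by omega)
          rw [Nat.mul_add, Nat.mul_one] at h2
          exact h2
        have hgk : g k = a * f k := rfl
        omega

lemma expand_block (f : ℕ → ℕ) (a : ℕ) (ha : 1 ≤ a) (k : ℕ) :
    (expandT a).outPrefix (seqOf f) (Bpos f k)
      = (List.range (Bpos (fun n => a * f n) k)).map (seqOf fun n => a * f n) := by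
  induction k with
  | zero => simp [Bpos_zero, FST.outPrefix]
  | succ k ih =>
    have := expand_inv f a ha k ih (f k + 1) (le_refl _)
    rw [Bpos_succ, Bpos_succ]
    have hmin : min (f k + 1) 1 = 1 := by omega
    rw [hmin] at this
    simpa [Nat.add_comm, Nat.add_assoc, Nat.add_left_comm] using this

lemma expand_transduces (f : ℕ → ℕ) (a : ℕ) (ha : 1 ≤ a) :
    (expandT a).Transduces (seqOf f) (seqOf fun n => a * f n) := by
  apply transduces_of
  · intro n
    obtain ⟨k, r, hr, hn⟩ := Bpos_decomp f n
    refine ⟨Bpos (fun n => a * f n) k + min r 1 + a * (r - 1), ?_⟩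
    rw [hn]
    exact expand_inv f a ha k (expand_block f a ha k) r (by omega)
  · intro b
    refine ⟨Bpos f b, ?_⟩
    rw [expand_block f a ha b]
    simp only [List.length_map, List.length_range]
    have : b ≤ Bpos (fun n => a * f n) b := Nat.le_add_right _ _
    exact this

/-! ### Direction 1: `⟨a·f⟩ ≥ ⟨f⟩` (contract each block of a zeros into one zero) -/

def contractT (a : ℕ) (ha : 0 < a) : FST where
  Q := Fin a
  fin := inferInstance
  q0 := ⟨0, ha⟩
  step q b := if b then ⟨0, ha⟩ else ⟨(q.val + 1) % a, Nat.mod_lt _ ha⟩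
  out q b := if b then [true] else if q.val = a - 1 then [false] else []

lemma contract_inv (f : ℕ → ℕ) (a : ℕ) (ha : 0 < a) (k : ℕ)
    (hbase :
      (contractT a ha).stateAt (seqOf fun n => a * f n) (Bpos (fun n => a * f n) k)
        = ⟨0, ha⟩ ∧
      (contractT a ha).outPrefix (seqOf fun n => a * f n) (Bpos (fun n => a * f n) k)
        = (List.range (Bpos f k)).map (seqOf f)) :
    ∀ r, r ≤ a * f k + 1 →
      (contractT a ha).stateAt (seqOf fun n => a * f n) (Bpos (fun n => a * f n) k + r)
        = ⟨(r - 1) % a, Nat.mod_lt _ ha⟩ ∧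
      (contractT a ha).outPrefix (seqOf fun n => a * f n) (Bpos (fun n => a * f n) k + r)
        = (List.range (Bpos f k + min r 1 + (r - 1) / a)).map (seqOf f) := by
  set g := fun n => a * f n with hg
  intro r
  induction r with
  | zero =>
    intro _
    refine ⟨?_, by simpa using hbase.2⟩
    rw [show (0 : ℕ) - 1 = 0 from rfl]
    simpa [Nat.zero_mod] using hbase.1
  | succ s ih =>
    intro hs
    obtain ⟨ihst, ihout⟩ := ih (by omega)
    have hstep : (contractT a ha).stateAt (seqOf g) (Bpos g k + (s + 1))
        = (contractT a ha).step ((contractT a ha).stateAt (seqOf g) (Bpos g k + s))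
            (seqOf g (Bpos g k + s)) := rfl
    have hout : (contractT a ha).outPrefix (seqOf g) (Bpos g k + (s + 1))
        = (contractT a ha).outPrefix (seqOf g) (Bpos g k + s)
          ++ (contractT a ha).out ((contractT a ha).stateAt (seqOf g) (Bpos g k + s))
              (seqOf g (Bpos g k + s)) := by
      rw [show Bpos g k + (s + 1) = (Bpos g k + s) + 1 from rfl, FST.outPrefix_succ]
    rcases Nat.eq_zero_or_pos s with hs0 | hs0
    · subst hs0
      have hσ : seqOf g (Bpos g k + 0) = true := by simpa using seqOf_Bpos g k
      constructor
      · rw [hstep, hσ, ihst]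
        simp only [contractT, if_pos rfl]
        apply Fin.ext
        simp [Nat.zero_mod]
      · rw [hout, hσ, ihout]
        simp only [contractT, if_pos rfl]
        have hτ : seqOf f (Bpos f k) = true := seqOf_Bpos f k
        rw [show Bpos f k + min 1 1 + (1 - 1) / a = Bpos f k + 1 by simp,
          map_range_succ, hτ]
        simp
    · have hσ : seqOf g (Bpos g k + s) = false := by
        apply seqOf_false_in_block g k s hs0
        show s ≤ a * f k
        omega
      have hstate : (contractT a ha).stateAt (seqOf g) (Bpos g k + s)
          = ⟨(s - 1) % a, Nat.mod_lt _ ha⟩ := ihst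
      have hsval : ((s - 1) % a + 1) % a = s % a := by
        rw [Nat.mod_add_mod]
        congr 1
        omega
      constructor
      · rw [hstep, hσ, hstate]
        simp only [contractT, if_neg (show ¬ (false = true) by simp)]
        apply Fin.ext
        simpa using hsval
      · rw [hout, hσ, hstate, ihout]
        have hmin : min s 1 = 1 := by omega
        have hmin' : min (s + 1) 1 = 1 := by omega
        rw [hmin, hmin']
        by_cases hdvd : (s - 1) % a = a - 1
        · -- a divides s; output [false], quotient increments
          have hsda : a ∣ s := by
            have h1 : s - 1 + 1 = s := by omega
            have := Nat.div_add_mod (s - 1) a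
            have h2 : s = a * ((s - 1) / a) + a := by omega
            exact ⟨(s - 1) / a + 1, by rw [Nat.mul_add, Nat.mul_one]; omega⟩
          have hq : (s + 1 - 1) / a = (s - 1) / a + 1 := by
            obtain ⟨c, rfl⟩ := hsda
            have hc : 0 < c := by
              rcases Nat.eq_zero_or_pos c with rfl | h
              · simp at hs0
              · exact h
            obtain ⟨c', rfl⟩ : ∃ c', c = c' + 1 := ⟨c - 1, by omega⟩
            have e2 : a * (c' + 1) - 1 = a * c' + (a - 1) := by
              rw [Nat.mul_add, Nat.mul_one]; omega
            rw [show a * (c' + 1) + 1 - 1 = a * (c' + 1) by omega,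
              Nat.mul_div_cancel_left _ ha, e2, Nat.mul_add_div ha,
              Nat.div_eq_of_lt (by omega)]
          simp only [contractT, if_neg (show ¬ (false = true) by simp), if_pos hdvd]
          rw [hq, show Bpos f k + 1 + ((s - 1) / a + 1) = (Bpos f k + 1 + (s - 1) / a) + 1 by ring,
            map_range_succ]
          congr 1
          have hτ : seqOf f (Bpos f k + 1 + (s - 1) / a) = false := by
            apply seqOf_false f k
            · have h0 := Nat.zero_le ((s - 1) / a)
              omega
            · rw [Bpos_succ]
              have hslt : s - 1 < a * f k := by omega
              have : (s - 1) / a < f k := by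
                rw [Nat.div_lt_iff_lt_mul ha]
                calc s - 1 < a * f k := hslt
                _ = f k * a := Nat.mul_comm _ _
              omega
          rw [show Bpos f k + 1 + (s - 1) / a = Bpos f k + (1 + (s - 1) / a) by ring] at hτ ⊢
          rw [hτ]
        · -- a does not divide s; output [], quotient stays
          have hndvd : ¬ a ∣ s := by
            rintro ⟨c, rfl⟩
            have hc : 0 < c := by
              rcases Nat.eq_zero_or_pos c with rfl | h
              · simp at hs0
              · exact h
            apply hdvd
            obtain ⟨c', rfl⟩ : ∃ c', c = c' + 1 := ⟨c - 1, by omega⟩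
            rw [Nat.mul_add, Nat.mul_one, show a * c' + a - 1 = a * c' + (a - 1) by omega,
              Nat.add_mod, Nat.mul_mod_right]
            simp [Nat.mod_eq_of_lt (show a - 1 < a by omega)]
          have hq : (s + 1 - 1) / a = (s - 1) / a := by
            rw [show s + 1 - 1 = s by omega, show s = (s - 1) + 1 by omega, Nat.succ_div,
              if_neg (by rw [show s - 1 + 1 = s by omega]; exact hndvd)]
            simp
          simp only [contractT, if_neg (show ¬ (false = true) by simp), if_neg hdvd]
          rw [hq]
          simp

lemma contract_block (f : ℕ → ℕ) (a : ℕ) (ha : 0 < a) (k : ℕ) :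
    (contractT a ha).stateAt (seqOf fun n => a * f n) (Bpos (fun n => a * f n) k)
      = ⟨0, ha⟩ ∧
    (contractT a ha).outPrefix (seqOf fun n => a * f n) (Bpos (fun n => a * f n) k)
      = (List.range (Bpos f k)).map (seqOf f) := by
  induction k with
  | zero =>
    constructor
    · rw [Bpos_zero]; rfl
    · rw [Bpos_zero, Bpos_zero]; simp [FST.outPrefix]
  | succ k ih =>
    obtain ⟨hst, hout⟩ := contract_inv f a ha k ih (a * f k + 1) (le_refl _)
    have hq : (a * f k + 1 - 1) / a = f k := by
      rw [show a * f k + 1 - 1 = a * f k by omega, Nat.mul_div_cancel_left _ ha]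
    have hm : (a * f k + 1 - 1) % a = 0 := by
      rw [show a * f k + 1 - 1 = a * f k by omega, Nat.mul_mod_right]
    have hmin : min (a * f k + 1) 1 = 1 := by omega
    have hB : Bpos (fun n => a * f n) (k + 1)
        = Bpos (fun n => a * f n) k + (a * f k + 1) := by
      rw [Bpos_succ]
      show Bpos (fun n => a * f n) k + 1 + a * f k = _
      ring
    constructor
    · rw [hB, hst]
      exact Fin.ext hm
    · rw [hB, hout, hq, hmin, Bpos_succ]

lemma contract_transduces (f : ℕ → ℕ) (a : ℕ) (ha : 0 < a) :
    (contractT a ha).Transduces (seqOf fun n => a * f n) (seqOf f) := by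
  apply transduces_of
  · intro n
    obtain ⟨k, r, hr, hn⟩ := Bpos_decomp (fun n => a * f n) n
    refine ⟨Bpos f k + min r 1 + (r - 1) / a, ?_⟩
    rw [hn]
    exact (contract_inv f a ha k (contract_block f a ha k) r (by omega)).2
  · intro b
    refine ⟨Bpos (fun n => a * f n) b, ?_⟩
    rw [(contract_block f a ha b).2]
    simp only [List.length_map, List.length_range]
    exact Nat.le_add_right _ _

/-- For `a ≥ 1`, `⟨f⟩` and `⟨a·f⟩` are transducer-equivalent. -/
theorem scalar_equiv (f : ℕ → ℕ) (a : ℕ) (ha : 1 ≤ a) :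
    Ge (seqOf fun n => a * f n) (seqOf f) ∧
    Ge (seqOf f) (seqOf fun n => a * f n) := by
  exact ⟨⟨contractT a ha, contract_transduces f a ha⟩,
    ⟨expandT a, expand_transduces f a ha⟩⟩
end

section
/- Given an FST with look-ahead T (a finite automaton whose transitions consume an input word u₁ with look-ahead u₂ and output a word w, satisfying the determinism condition that in any state, at most one transition pattern (u₁, u₂) matches any given input stream), there exists an ordinary complete deterministic FST T' such that T'(σ) = T(σ) for every infinite sequence σ on which T is defined. -/
/-- A finite-state transducer with look-ahead: transitions consume an input
word `u₁` with look-ahead `u₂` and output a word, subject to determinism: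
in any state at most one pattern `(u₁, u₂)` matches a given input stream. -/
structure LFST where
  Q : Type
  fin : Fintype Q
  q0 : Q
  D : Finset (Q × List Bool × List Bool)
  ne : ∀ t ∈ D, t.2.1 ≠ ([] : List Bool)
  step : Q × List Bool × List Bool → Q
  out : Q × List Bool × List Bool → List Bool
  det : ∀ (q : Q) (u₁ u₂ v₁ v₂ : List Bool), (q, u₁, u₂) ∈ D → (q, v₁, v₂) ∈ D →
    (u₁ ++ u₂) <+: (v₁ ++ v₂) → u₁ = v₁ ∧ u₂ = v₂

/-- The factor of the infinite sequence `σ` of length `k` starting at `i`. -/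
def streamTake (σ : ℕ → Bool) (i k : ℕ) : List Bool :=
  (List.range k).map fun j => σ (i + j)

/-- `T` (an FST with look-ahead) is defined on `σ` and realizes the output
`τ`: there is an infinite run consuming `σ` whose outputs grow unboundedly
and concatenate to `τ`. -/
def LFST.Realizes (T : LFST) (σ τ : ℕ → Bool) : Prop :=
  ∃ (st : ℕ → T.Q) (pos : ℕ → ℕ) (u : ℕ → List Bool × List Bool),
    st 0 = T.q0 ∧ pos 0 = 0 ∧
    (∀ n, (st n, u n) ∈ T.D ∧
      streamTake σ (pos n) ((u n).1.length + (u n).2.length) = (u n).1 ++ (u n).2 ∧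
      st (n + 1) = T.step (st n, u n) ∧
      pos (n + 1) = pos n + (u n).1.length) ∧
    Filter.Tendsto
      (fun n => (((List.range n).map fun i => T.out (st i, u i)).flatten).length)
      Filter.atTop Filter.atTop ∧
    ∀ n j, j < (((List.range n).map fun i => T.out (st i, u i)).flatten).length →
      (((List.range n).map fun i => T.out (st i, u i)).flatten).getD j false = τ j


/- ===== Auxiliary development for the proof ===== -/

open Classical in
noncomputable instance bufFin (L : ℕ) : Fintype {l : List Bool // l.length ≤ L} := by
  have : Finite {l : List Bool // l.length ≤ L} := by
    apply Finite.of_injective (fun l : {l : List Bool // l.length ≤ L} =>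
      ((fun i : Fin L => l.1.getD i false), (⟨l.1.length, Nat.lt_succ_of_le l.2⟩ : Fin (L+1))))
    intro a b h
    have h2 : a.1.length = b.1.length := congrArg (fun p => (p.2 : Fin (L+1)).1) h
    have h1 : ∀ i : Fin L, a.1.getD i false = b.1.getD i false :=
      fun i => congrFun (congrArg Prod.fst h) i
    apply Subtype.ext
    apply List.ext_getElem h2
    intro n hn1 hn2
    have hnL : n < L := lt_of_lt_of_le hn1 a.2
    have := h1 ⟨n, hnL⟩
    rwa [List.getD_eq_getElem _ _ hn1, List.getD_eq_getElem _ _ hn2] at this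
  exact Fintype.ofFinite _

/-- Maximal pattern length of a look-ahead FST. -/
def LFST.Lb (T : LFST) : ℕ := T.D.sup fun t => t.2.1.length + t.2.2.length

open Classical in
/-- Repeatedly fire all transitions of `T` enabled by the buffer `b`,
returning final state, remaining buffer and concatenated output. -/
noncomputable def LFST.process (T : LFST) (q : T.Q) (b : List Bool) :
    T.Q × List Bool × List Bool :=
  if h : ∃ u : List Bool × List Bool, (q, u) ∈ T.D ∧ u.1 ++ u.2 <+: b then
    let u := Classical.choose h
    let p := T.process (T.step (q, u)) (b.drop u.1.length)
    (p.1, p.2.1, T.out (q, u) ++ p.2.2)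
  else (q, b, [])
termination_by b.length
decreasing_by
  have hu := Classical.choose_spec h
  have hne : (Classical.choose h).1 ≠ [] := T.ne _ hu.1
  have h1 : 1 ≤ (Classical.choose h).1.length := List.length_pos_iff.mpr hne
  have h2 := hu.2.length_le
  simp only [List.length_append] at h2
  simp only [List.length_drop]
  omega

open Classical in
lemma LFST.process_eq_of_not (T : LFST) {q : T.Q} {b : List Bool}
    (h : ¬ ∃ u : List Bool × List Bool, (q, u) ∈ T.D ∧ u.1 ++ u.2 <+: b) :
    T.process q b = (q, b, []) := by
  rw [LFST.process, dif_neg h]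

open Classical in
lemma LFST.process_eq_of_fire (T : LFST) {q : T.Q} {b : List Bool}
    {u : List Bool × List Bool} (hu : (q, u) ∈ T.D) (hp : u.1 ++ u.2 <+: b)
    (huniq : ∀ v : List Bool × List Bool, (q, v) ∈ T.D → v.1 ++ v.2 <+: b → v = u) :
    T.process q b =
      ((T.process (T.step (q, u)) (b.drop u.1.length)).1,
       (T.process (T.step (q, u)) (b.drop u.1.length)).2.1,
       T.out (q, u) ++ (T.process (T.step (q, u)) (b.drop u.1.length)).2.2) := by
  have h : ∃ u : List Bool × List Bool, (q, u) ∈ T.D ∧ u.1 ++ u.2 <+: b := ⟨u, hu, hp⟩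
  have hc : Classical.choose h = u :=
    huniq _ (Classical.choose_spec h).1 (Classical.choose_spec h).2
  rw [LFST.process, dif_pos h]
  simp only [hc]

lemma LFST.pat_uniq (T : LFST) {q : T.Q} {u v : List Bool × List Bool} {w : List Bool}
    (hu : (q, u) ∈ T.D) (hv : (q, v) ∈ T.D)
    (h1 : u.1 ++ u.2 <+: w) (h2 : v.1 ++ v.2 <+: w) : u = v := by
  rcases List.prefix_or_prefix_of_prefix h1 h2 with h | h
  · obtain ⟨a, b⟩ := T.det q u.1 u.2 v.1 v.2 hu hv h
    exact Prod.ext a b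
  · obtain ⟨a, b⟩ := T.det q v.1 v.2 u.1 u.2 hv hu h
    exact Prod.ext a.symm b.symm

lemma streamTake_length (σ : ℕ → Bool) (i k : ℕ) : (streamTake σ i k).length = k := by
  simp [streamTake]

lemma streamTake_add (σ : ℕ → Bool) (i a b : ℕ) :
    streamTake σ i (a + b) = streamTake σ i a ++ streamTake σ (i + a) b := by
  simp only [streamTake, List.range_add, List.map_append, List.map_map]
  congr 1
  ext j
  simp [Function.comp, Nat.add_assoc]

lemma streamTake_prefix (σ : ℕ → Bool) (i : ℕ) {a b : ℕ} (h : a ≤ b) :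
    streamTake σ i a <+: streamTake σ i b :=
  ⟨streamTake σ (i + a) (b - a), by rw [← streamTake_add, Nat.add_sub_cancel' h]⟩

lemma streamTake_drop (σ : ℕ → Bool) (i : ℕ) {d k : ℕ} (h : d ≤ k) :
    (streamTake σ i k).drop d = streamTake σ (i + d) (k - d) := by
  have h1 : streamTake σ i k = streamTake σ i d ++ streamTake σ (i + d) (k - d) := by
    rw [← streamTake_add, Nat.add_sub_cancel' h]
  rw [h1, List.drop_left' (streamTake_length σ i d)]

lemma streamTake_snoc (σ : ℕ → Bool) (i k : ℕ) :
    streamTake σ i (k + 1) = streamTake σ i k ++ [σ (i + k)] := by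
  rw [streamTake_add]
  simp [streamTake, List.range_succ]

/-- Output of `T` along steps `n, …, N-1` of a run. -/
def LFST.Oout (T : LFST) (st : ℕ → T.Q) (u : ℕ → List Bool × List Bool) (n N : ℕ) :
    List Bool :=
  ((List.range' n (N - n)).map fun i => T.out (st i, u i)).flatten

lemma LFST.Oout_self (T : LFST) (st : ℕ → T.Q) (u : ℕ → List Bool × List Bool) (n : ℕ) :
    T.Oout st u n n = [] := by simp [LFST.Oout]

lemma LFST.Oout_zero (T : LFST) (st : ℕ → T.Q) (u : ℕ → List Bool × List Bool) (n : ℕ) :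
    T.Oout st u 0 n = ((List.range n).map fun i => T.out (st i, u i)).flatten := by
  simp [LFST.Oout, List.range_eq_range']

lemma LFST.Oout_append (T : LFST) (st : ℕ → T.Q) (u : ℕ → List Bool × List Bool)
    {a b c : ℕ} (h1 : a ≤ b) (h2 : b ≤ c) :
    T.Oout st u a b ++ T.Oout st u b c = T.Oout st u a c := by
  have h : List.range' a (b - a) ++ List.range' b (c - b) = List.range' a (c - a) := by
    have := List.range'_append (s := a) (m := b - a) (n := c - b) (step := 1)
    rw [one_mul, show a + (b - a) = b by omega, show b - a + (c - b) = c - a by omega] at this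
    exact this
  simp only [LFST.Oout, ← h, List.map_append, List.flatten_append]

lemma LFST.Oout_succ (T : LFST) (st : ℕ → T.Q) (u : ℕ → List Bool × List Bool)
    {n N : ℕ} (h : n < N) :
    T.Oout st u n N = T.out (st n, u n) ++ T.Oout st u (n + 1) N := by
  have h1 : N - n = (N - (n + 1)) + 1 := by omega
  simp only [LFST.Oout, h1, List.range'_succ, List.map_cons, List.flatten_cons]

/-- The simulating ordinary FST: states are pairs (state of `T`, buffer). -/
noncomputable def LFST.simFST (T : LFST) : FST where
  Q := T.Q × {l : List Bool // l.length ≤ T.Lb}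
  fin := letI := T.fin; inferInstance
  q0 := (T.q0, ⟨[], by simp⟩)
  step p a := ((T.process p.1 (p.2.1 ++ [a])).1,
    ⟨(T.process p.1 (p.2.1 ++ [a])).2.1.take T.Lb, List.length_take_le _ _⟩)
  out p a := (T.process p.1 (p.2.1 ++ [a])).2.2

lemma LFST.simFST_step_fst (T : LFST) (p : T.simFST.Q) (a : Bool) :
    (T.simFST.step p a).1 = (T.process p.1 (p.2.1 ++ [a])).1 := rfl

lemma LFST.simFST_step_snd (T : LFST) (p : T.simFST.Q) (a : Bool) :
    (T.simFST.step p a).2.1 = (T.process p.1 (p.2.1 ++ [a])).2.1.take T.Lb := rfl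

lemma LFST.simFST_out (T : LFST) (p : T.simFST.Q) (a : Bool) :
    T.simFST.out p a = (T.process p.1 (p.2.1 ++ [a])).2.2 := rfl

lemma FST.outPrefix_succ_s17 (T' : FST) (σ : ℕ → Bool) (m : ℕ) :
    T'.outPrefix σ (m + 1) = T'.outPrefix σ m ++ T'.out (T'.stateAt σ m) (σ m) := by
  simp [FST.outPrefix, List.range_succ]

/-- Every FST with look-ahead can be simulated by an ordinary complete
deterministic FST on all sequences where it is defined. -/
theorem lfst_to_fst (T : LFST) :
    ∃ T' : FST, ∀ σ τ : ℕ → Bool, T.Realizes σ τ → T'.Transduces σ τ := by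
  refine ⟨T.simFST, ?_⟩
  intro σ τ hR
  obtain ⟨st, pos, u, h0, hp0, hrun, htend, hpref⟩ := hR
  -- basic facts about the run
  set Ln : ℕ → ℕ := fun n => (u n).1.length + (u n).2.length with hLn
  have hmem : ∀ n, (st n, u n) ∈ T.D := fun n => (hrun n).1
  have hpat : ∀ n, streamTake σ (pos n) (Ln n) = (u n).1 ++ (u n).2 := fun n => (hrun n).2.1
  have hstep : ∀ n, st (n + 1) = T.step (st n, u n) := fun n => (hrun n).2.2.1
  have hposs : ∀ n, pos (n + 1) = pos n + (u n).1.length := fun n => (hrun n).2.2.2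
  have hL1 : ∀ n, 1 ≤ (u n).1.length := fun n =>
    List.length_pos_iff.mpr (T.ne _ (hmem n))
  have hLle : ∀ n, Ln n ≤ T.Lb := fun n =>
    Finset.le_sup (f := fun t : T.Q × List Bool × List Bool => t.2.1.length + t.2.2.length)
      (hmem n)
  -- in any state of the run, the only pattern matching the stream is the run's one
  have huniq : ∀ n (k : ℕ) (v : List Bool × List Bool), (st n, v) ∈ T.D →
      v.1 ++ v.2 <+: streamTake σ (pos n) k → v = u n := by
    intro n k v hv hvp
    have hvp' : v.1 ++ v.2 <+: streamTake σ (pos n) (max k (Ln n)) :=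
      hvp.trans (streamTake_prefix σ (pos n) (le_max_left _ _))
    have hup' : (u n).1 ++ (u n).2 <+: streamTake σ (pos n) (max k (Ln n)) := by
      rw [← hpat n]
      exact streamTake_prefix σ (pos n) (le_max_right _ _)
    exact T.pat_uniq hv (hmem n) hvp' hup'
  -- the buffer never enables a transition while shorter than the next pattern
  have noFire : ∀ n m, pos n ≤ m → m < pos n + Ln n →
      T.process (st n) (streamTake σ (pos n) (m - pos n)) =
        (st n, streamTake σ (pos n) (m - pos n), []) := by
    intro n m h1 h2
    apply T.process_eq_of_not
    rintro ⟨v, hv, hvp⟩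
    have hveq : v = u n := huniq n _ v hv hvp
    have hlen := hvp.length_le
    rw [streamTake_length] at hlen
    simp only [hveq] at hlen
    have : Ln n ≤ m - pos n := by
      simpa [hLn, List.length_append] using hlen
    omega
  -- main lemma: processing the buffer replays the run as far as possible
  have processRun : ∀ k n m, pos n ≤ m → m - pos n ≤ k → ∃ N, n ≤ N ∧ pos N ≤ m ∧
      m < pos N + Ln N ∧
      T.process (st n) (streamTake σ (pos n) (m - pos n)) =
        (st N, streamTake σ (pos N) (m - pos N), T.Oout st u n N) := by
    intro k
    induction k with
    | zero =>
      intro n m h1 h2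
      have hm : m = pos n := by omega
      have hlt : m < pos n + Ln n := by have := hL1 n; simp only [hLn]; omega
      exact ⟨n, le_refl n, h1, hlt, by rw [noFire n m h1 hlt, LFST.Oout_self]⟩
    | succ k ih =>
      intro n m h1 h2
      by_cases hc : m < pos n + Ln n
      · exact ⟨n, le_refl n, h1, hc, by rw [noFire n m h1 hc, LFST.Oout_self]⟩
      · push_neg at hc
        have hLm : Ln n ≤ m - pos n := by omega
        have hpre : (u n).1 ++ (u n).2 <+: streamTake σ (pos n) (m - pos n) := by
          rw [← hpat n]
          exact streamTake_prefix σ (pos n) hLm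
        rw [T.process_eq_of_fire (hmem n) hpre (fun v hv hvp => huniq n _ v hv hvp)]
        have hdrop : (streamTake σ (pos n) (m - pos n)).drop (u n).1.length =
            streamTake σ (pos (n + 1)) (m - pos (n + 1)) := by
          rw [streamTake_drop σ (pos n) (by simp only [hLn] at hLm; omega),
            ← hposs n, show m - pos n - (u n).1.length = m - pos (n + 1) by
              rw [hposs n]; omega]
        have hn1 : pos (n + 1) ≤ m := by
          rw [hposs n]; simp only [hLn] at hc; omega
        have hk1 : m - pos (n + 1) ≤ k := by
          rw [hposs n]; have := hL1 n; omega
        obtain ⟨N, hN1, hN2, hN3, hN4⟩ := ih (n + 1) m hn1 hk1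
        refine ⟨N, by omega, hN2, hN3, ?_⟩
        rw [← hstep n, hdrop, hN4, T.Oout_succ st u (show n < N by omega)]
  -- invariant relating the simulating FST to the run
  have inv : ∀ m, ∃ n, pos n ≤ m ∧ m < pos n + Ln n ∧
      ((T.simFST).stateAt σ m).1 = st n ∧
      ((T.simFST).stateAt σ m).2.1 = streamTake σ (pos n) (m - pos n) ∧
      (T.simFST).outPrefix σ m = T.Oout st u 0 n := by
    intro m
    induction m with
    | zero =>
      refine ⟨0, by omega, ?_, ?_, ?_, ?_⟩
      · have := hL1 0; simp only [hLn]; omega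
      · simp [FST.stateAt, LFST.simFST, h0]
      · simp [FST.stateAt, LFST.simFST, hp0, streamTake]
      · simp [FST.outPrefix, LFST.Oout_self]
    | succ m ih =>
      obtain ⟨n, hn1, hn2, hs1, hs2, ho⟩ := ih
      have hb : ((T.simFST).stateAt σ m).2.1 ++ [σ m] =
          streamTake σ (pos n) (m + 1 - pos n) := by
        rw [hs2, show m + 1 - pos n = (m - pos n) + 1 by omega, streamTake_snoc,
          show pos n + (m - pos n) = m by omega]
      obtain ⟨N, hN0, hN1, hN2, hN3⟩ := processRun (m + 1 - pos n) n (m + 1)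
        (by omega) (le_refl _)
      have hstate : (T.simFST).stateAt σ (m + 1) =
          (T.simFST).step ((T.simFST).stateAt σ m) (σ m) := rfl
      refine ⟨N, hN1, hN2, ?_, ?_, ?_⟩
      · rw [hstate, LFST.simFST_step_fst, hs1, hb, hN3]
      · rw [hstate, LFST.simFST_step_snd, hs1, hb, hN3]
        apply List.take_of_length_le
        rw [streamTake_length]
        have := hLle N
        omega
      · rw [FST.outPrefix_succ_s17, ho, LFST.simFST_out, hs1, hb, hN3]
        exact T.Oout_append st u (Nat.zero_le n) hN0
  choose nf hnf using inv
  have hO0 : ∀ n, T.Oout st u 0 n = ((List.range n).map fun i => T.out (st i, u i)).flatten :=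
    fun n => T.Oout_zero st u n
  have hLbpos : 1 ≤ T.Lb := by
    have h1 := hL1 0
    have h2 := hLle 0
    simp only [hLn] at h2
    omega
  have hposle : ∀ n, pos n ≤ n * T.Lb := by
    intro n
    induction n with
    | zero => omega
    | succ n ih =>
      rw [hposs n, Nat.succ_mul]
      have h1 : (u n).1.length ≤ Ln n := by simp only [hLn]; omega
      have := hLle n
      omega
  have hnf_tend : Filter.Tendsto nf Filter.atTop Filter.atTop := by
    rw [Filter.tendsto_atTop]
    intro b
    rw [Filter.eventually_atTop]
    refine ⟨(b + 1) * T.Lb, fun m hm => ?_⟩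
    have h1 : m < (nf m + 1) * T.Lb := by
      have h2 := (hnf m).1
      have h3 := (hnf m).2.1
      have h4 := hposle (nf m)
      have h5 := hLle (nf m)
      rw [Nat.succ_mul]
      omega
    have h6 : (b + 1) * T.Lb < (nf m + 1) * T.Lb := lt_of_le_of_lt hm h1
    have h7 : b + 1 < nf m + 1 := Nat.lt_of_mul_lt_mul_right h6
    omega
  constructor
  · have hfun : (fun m => ((T.simFST).outPrefix σ m).length) =
        (fun n => (((List.range n).map fun i => T.out (st i, u i)).flatten).length) ∘ nf := by
      funext m
      rw [Function.comp_apply, (hnf m).2.2.2.2, hO0]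
    rw [hfun]
    exact htend.comp hnf_tend
  · intro m j hj
    rw [(hnf m).2.2.2.2, hO0] at hj ⊢
    exact hpref (nf m) j hj
end
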